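/- arXiv:1711.05561 — 3 statements merged into one kernel-verified Lean document; each statement's English description precedes it below -/
import Mathlib

section
/- Fairness property: consider the optimization max over p ∈ ℝ^{I×J}_{>0} of Σ_{i,j} z_{ij} R̄_i u(p_{ij}) subject to Σ_{i,j} R̄_i z_{ij} p_{ij} ≤ δ, where u is strictly increasing, strictly concave, differentiable with u'(x) → ∞ as x → 0, z_{ij} > 0, R̄_i > 0, δ > 0. Then at the optimum all p_{ij} are equal to the common value p = δ / (Σ_{i,j} R̄_i z_{ij}). -/
/-!
Normalising the weights `R̄ᵢ zᵢⱼ` to a probability vector, Jensen's inequality bounds the weighted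
mean of `u ∘ q` by `u` of the weighted mean of `q`, and the budget caps the latter mean by `p*`.
As `u` is strictly increasing, one of the two inequalities is strict unless `q ≡ p*`: if the mean
of `q` equals `p*`, the strict form of Jensen applies because `q` is then not constant.
-/

open Finset

theorem StrictConcaveOn.sum_smul_lt_of_sum_smul_le {ι : Type*} {t : Finset ι} {s : Set ℝ}
    {u : ℝ → ℝ} {w q : ι → ℝ} {p : ℝ} (huconc : StrictConcaveOn ℝ s u)
    (humono : StrictMonoOn u s) (hw : ∀ i ∈ t, 0 < w i) (hw1 : ∑ i ∈ t, w i = 1)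
    (hq : ∀ i ∈ t, q i ∈ s) (hp : p ∈ s) (hmean : ∑ i ∈ t, w i • q i ≤ p)
    (hne : ∃ j ∈ t, q j ≠ p) :
    ∑ i ∈ t, w i • u (q i) < u p := by
  set m := ∑ i ∈ t, w i • q i
  have hjensen : ∑ i ∈ t, w i • u (q i) ≤ u m :=
    huconc.concaveOn.le_map_sum (fun i hi => (hw i hi).le) hw1 hq
  rcases hmean.lt_or_eq with hlt | rfl
  · have hm : m ∈ s := huconc.1.sum_mem (fun i hi => (hw i hi).le) hw1 hq
    exact hjensen.trans_lt (humono hm hp hlt)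
  · exact (huconc.lt_map_sum_iff_of_pos' hw hw1 hq).2 hne

theorem StrictConcaveOn.sum_mul_lt_of_sum_mul_le {ι : Type*} {t : Finset ι} {s : Set ℝ}
    {u : ℝ → ℝ} {a q : ι → ℝ} {p : ℝ} (huconc : StrictConcaveOn ℝ s u)
    (humono : StrictMonoOn u s) (ha : ∀ i ∈ t, 0 < a i)
    (hq : ∀ i ∈ t, q i ∈ s) (hp : p ∈ s) (hbudget : ∑ i ∈ t, a i * q i ≤ (∑ i ∈ t, a i) * p)
    (hne : ∃ j ∈ t, q j ≠ p) :
    ∑ i ∈ t, a i * u (q i) < (∑ i ∈ t, a i) * u p := by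
  have hS : 0 < ∑ i ∈ t, a i := sum_pos ha <| hne.imp fun _ hj => hj.1
  have key := huconc.sum_smul_lt_of_sum_smul_le humono (w := fun i => a i / ∑ i ∈ t, a i)
    (fun i hi => div_pos (ha i hi) hS) (by rw [← sum_div, div_self hS.ne']) hq hp ?_ hne
  · simp_rw [smul_eq_mul, div_mul_eq_mul_div, ← sum_div] at key
    rwa [div_lt_iff₀ hS, mul_comm] at key
  · simp_rw [smul_eq_mul, div_mul_eq_mul_div, ← sum_div]
    rwa [div_le_iff₀ hS, mul_comm]

theorem fairness_property_general
    (I J : ℕ)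
    (z : Fin I → Fin J → ℝ) (Rbar : Fin I → ℝ) (δ : ℝ)
    (hz : ∀ i j, 0 < z i j) (hR : ∀ i, 0 < Rbar i) (hδ : 0 < δ)
    (u : ℝ → ℝ)
    (humono : StrictMonoOn u (Set.Ioi 0))
    (huconc : StrictConcaveOn ℝ (Set.Ioi 0) u)
    (pstar : ℝ) (hpstar : pstar = δ / (∑ i, ∑ j, Rbar i * z i j)) :
    (∑ i, ∑ j, Rbar i * z i j * pstar ≤ δ) ∧
    ∀ q : Fin I → Fin J → ℝ, (∀ i j, 0 < q i j) →
      (∑ i, ∑ j, Rbar i * z i j * q i j ≤ δ) →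
      q ≠ (fun _ _ => pstar) →
      ∑ i, ∑ j, z i j * Rbar i * u (q i j) <
        ∑ i, ∑ j, z i j * Rbar i * u pstar := by
  set S := ∑ i, ∑ j, Rbar i * z i j
  have hS : 0 ≤ S := sum_nonneg fun i _ => sum_nonneg fun j _ => (mul_pos (hR i) (hz i j)).le
  have hSp : ∑ i, ∑ j, Rbar i * z i j * pstar = S * pstar := by simp_rw [S, sum_mul]
  refine ⟨?_, fun q hq hbudget hne => ?_⟩
  · rcases hS.eq_or_lt with hS0 | hSpos
    · rw [hSp, ← hS0, zero_mul]; exact hδ.le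
    · rw [hSp, hpstar, mul_div_cancel₀ _ hSpos.ne']
  obtain ⟨i₀, j₀, hij⟩ : ∃ i j, q i j ≠ pstar := by
    by_contra! h; exact hne (funext fun i => funext (h i))
  have hSpos : 0 < S := sum_pos (fun i _ => sum_pos (fun j _ => mul_pos (hR i) (hz i j))
    ⟨j₀, mem_univ _⟩) ⟨i₀, mem_univ _⟩
  have key := huconc.sum_mul_lt_of_sum_mul_le humono (t := univ)
    (a := fun x : Fin I × Fin J => Rbar x.1 * z x.1 x.2) (q := fun x => q x.1 x.2) (p := pstar)
    (fun x _ => mul_pos (hR x.1) (hz x.1 x.2)) (fun x _ => hq x.1 x.2)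
    (by rw [hpstar]; exact div_pos hδ hSpos) ?_ ⟨(i₀, j₀), mem_univ _, hij⟩
  · simp only [Fintype.sum_prod_type] at key
    simpa only [mul_comm (z _ _), ← sum_mul] using key
  · simp only [Fintype.sum_prod_type]
    rwa [hpstar, mul_div_cancel₀ _ hSpos.ne']

/-- Fairness property: the maximizer of `Σ z_{ij} R̄_i u(p_{ij})` over positive `p`
subject to `Σ R̄_i z_{ij} p_{ij} ≤ δ` is the constant allocation
`p_{ij} = δ/(Σ R̄_k z_{kl})`: it is feasible and strictly better than any other
feasible allocation. -/
theorem fairness_property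
    (I J : ℕ) (hI : 1 ≤ I) (hJ : 1 ≤ J)
    (z : Fin I → Fin J → ℝ) (Rbar : Fin I → ℝ) (δ : ℝ)
    (hz : ∀ i j, 0 < z i j) (hR : ∀ i, 0 < Rbar i) (hδ : 0 < δ)
    (u u' : ℝ → ℝ)
    (humono : StrictMonoOn u (Set.Ioi 0))
    (huconc : StrictConcaveOn ℝ (Set.Ioi 0) u)
    (hu : ∀ x : ℝ, 0 < x → HasDerivAt u (u' x) x)
    (hu'top : Filter.Tendsto u' (nhdsWithin 0 (Set.Ioi 0)) Filter.atTop)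
    (pstar : ℝ) (hpstar : pstar = δ / (∑ i, ∑ j, Rbar i * z i j)) :
    (∑ i, ∑ j, Rbar i * z i j * pstar ≤ δ) ∧
    ∀ q : Fin I → Fin J → ℝ, (∀ i j, 0 < q i j) →
      (∑ i, ∑ j, Rbar i * z i j * q i j ≤ δ) →
      q ≠ (fun _ _ => pstar) →
      ∑ i, ∑ j, z i j * Rbar i * u (q i j) <
        ∑ i, ∑ j, z i j * Rbar i * u pstar :=
  fairness_property_general I J z Rbar δ hz hR hδ u humono huconc pstar hpstar
end

section
/- The product-form distribution π(n) = (1−ρ)(Σ_i n_i)! Π_i ρ_i^{n_i}/n_i! is stationary for the multiclass processor-sharing Markov chain: for all n ∈ ℕ^I, Σ_i λ_i·π(n) + Σ_{i : n_i>0} (n_i/(μ_i Σ_k n_k))·π(n) = Σ_i λ_i·π(n − e_i)·1{n_i > 0} + Σ_i ((n_i+1)/(μ_i (Σ_k n_k + 1)))·π(n + e_i), where ρ_i = λ_i μ_i and ρ = Σρ_i < 1. (Here class-i arrivals occur at rate λ_i and class-i departures from state n occur at rate n_i/(μ_i Σ_k n_k).) -/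
/-!
The product form satisfies partial balance class by class: the flow out of `n` through a class-`i`
arrival equals the flow into `n` through a class-`i` departure from `n + eᵢ`, because
`π(n + eᵢ) (nᵢ + 1) = ρᵢ (|n| + 1) π(n)`. The departure balance is the same identity read at
`n - eᵢ`. Summing the two over all classes gives global balance.
-/

open Finset Function
open scoped Nat

lemma pow_div_factorial_succ_mul {K : Type*} [Field K] [CharZero K] (x : K) (m : ℕ) :
    x ^ (m + 1) / (m + 1)! * (m + 1) = x * (x ^ m / m !) := by
  rw [Nat.factorial_succ]
  push_cast
  field_simp
  ring

lemma sum_update_succ {ι : Type*} [Fintype ι] [DecidableEq ι] (n : ι → ℕ) (i : ι) :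
    ∑ k, update n i (n i + 1) k = ∑ k, n k + 1 := by
  rw [sum_update_of_mem (mem_univ i), ← add_sum_erase univ n (mem_univ i),
    sdiff_singleton_eq_erase]
  ring

section ProductForm

variable {ι K : Type*} [Fintype ι] [DecidableEq ι] [Field K] [CharZero K]

def productFormWeight (ρ : ι → K) (n : ι → ℕ) : K :=
  (∑ i, n i)! * ∏ i, ρ i ^ n i / (n i)!

lemma productFormWeight_update_succ (ρ : ι → K) (n : ι → ℕ) (i : ι) :
    productFormWeight ρ (update n i (n i + 1)) * (n i + 1) =
      ρ i * ((∑ k, (n k : K)) + 1) * productFormWeight ρ n := by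
  have hprod : ∏ k, ρ k ^ update n i (n i + 1) k / (update n i (n i + 1) k)! =
      ρ i ^ (n i + 1) / (n i + 1)! * ∏ k ∈ univ.erase i, ρ k ^ n k / (n k)! := by
    rw [← mul_prod_erase univ _ (mem_univ i), update_self]
    exact congrArg _ <| prod_congr rfl fun k hk => by rw [update_of_ne (ne_of_mem_erase hk)]
  unfold productFormWeight
  rw [sum_update_succ, hprod, ← mul_prod_erase univ (fun k => ρ k ^ n k / (n k)!) (mem_univ i),
    Nat.factorial_succ]
  push_cast
  linear_combination ((∑ k, (n k : K)) + 1) * ((∑ k, n k)! : K) *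
    (∏ k ∈ univ.erase i, ρ k ^ n k / (n k)!) * pow_div_factorial_succ_mul (ρ i) (n i)

lemma arrival_balance (ρ : ι → K) (lam μ : K) (n : ι → ℕ) (i : ι)
    (hρ : ρ i = lam * μ) (hμ : μ ≠ 0) :
    ((n i : K) + 1) / (μ * ((∑ k, (n k : K)) + 1)) * productFormWeight ρ (update n i (n i + 1)) =
      lam * productFormWeight ρ n := by
  have hS : (∑ k, (n k : K)) + 1 ≠ 0 := by
    rw [← Nat.cast_sum]
    exact Nat.cast_add_one_ne_zero _
  have key := productFormWeight_update_succ ρ n i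
  rw [hρ] at key
  field_simp
  linear_combination key

lemma departure_balance (ρ : ι → K) (lam μ : K) (n : ι → ℕ) (i : ι)
    (hρ : ρ i = lam * μ) (hμ : μ ≠ 0) (hn : 0 < n i) :
    (n i : K) / (μ * ∑ k, (n k : K)) * productFormWeight ρ n =
      lam * productFormWeight ρ (update n i (n i - 1)) := by
  obtain ⟨m, rfl⟩ : ∃ m, n = update m i (m i + 1) :=
    ⟨update n i (n i - 1), by rw [update_self, Nat.sub_add_cancel hn, update_idem, update_eq_self]⟩
  rw [← Nat.cast_sum, sum_update_succ]
  simp only [update_self, update_idem, Nat.add_sub_cancel, update_eq_self]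
  push_cast
  exact arrival_balance ρ lam μ m i hρ hμ

end ProductForm

theorem product_form_stationary_general
    (I : ℕ) (lam μ : Fin I → ℝ)
    (hμ : ∀ i, 0 < μ i)
    (ρ : Fin I → ℝ) (hρ : ∀ i, ρ i = lam i * μ i)
    (π : (Fin I → ℕ) → ℝ)
    (hπ : ∀ n, π n = (1 - ∑ i, ρ i) * (Nat.factorial (∑ i, n i)) *
        ∏ i, ρ i ^ (n i) / (Nat.factorial (n i))) :
    ∀ n : Fin I → ℕ,
      (∑ i, lam i) * π n +
        (∑ i, if 0 < n i then (n i : ℝ) / (μ i * ∑ k, (n k : ℝ)) else 0) * π n =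
      (∑ i, if 0 < n i then lam i * π (Function.update n i (n i - 1)) else 0) +
        ∑ i, ((n i : ℝ) + 1) / (μ i * ((∑ k, (n k : ℝ)) + 1)) *
          π (Function.update n i (n i + 1)) := by
  obtain rfl : π = fun n => (1 - ∑ i, ρ i) * productFormWeight ρ n :=
    funext fun n => by rw [hπ, productFormWeight, mul_assoc]
  intro n
  have arrivals : ∀ i, ((n i : ℝ) + 1) / (μ i * ((∑ k, (n k : ℝ)) + 1)) *
        ((1 - ∑ i, ρ i) * productFormWeight ρ (update n i (n i + 1))) =
      lam i * ((1 - ∑ i, ρ i) * productFormWeight ρ n) := fun i => by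
    rw [mul_left_comm, arrival_balance ρ (lam i) (μ i) n i (hρ i) (hμ i).ne', mul_left_comm]
  have departures : ∀ i,
      (if 0 < n i then (n i : ℝ) / (μ i * ∑ k, (n k : ℝ)) else 0) *
        ((1 - ∑ i, ρ i) * productFormWeight ρ n) =
      if 0 < n i then lam i * ((1 - ∑ i, ρ i) * productFormWeight ρ (update n i (n i - 1)))
        else 0 := fun i => by
    split_ifs with hn
    · rw [mul_left_comm, departure_balance ρ (lam i) (μ i) n i (hρ i) (hμ i).ne' hn,
        mul_left_comm]
    · exact zero_mul _
  rw [sum_mul, sum_mul, add_comm, sum_congr rfl fun i _ => departures i,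
    sum_congr rfl fun i _ => (arrivals i).symm]

/-- The product-form distribution is stationary for the multiclass
processor-sharing Markov chain: the global balance equations hold. -/
theorem product_form_stationary
    (I : ℕ) (hI : 1 ≤ I) (lam μ : Fin I → ℝ)
    (hlam : ∀ i, 0 < lam i) (hμ : ∀ i, 0 < μ i)
    (ρ : Fin I → ℝ) (hρ : ∀ i, ρ i = lam i * μ i) (hρsum : ∑ i, ρ i < 1)
    (π : (Fin I → ℕ) → ℝ)
    (hπ : ∀ n, π n = (1 - ∑ i, ρ i) * (Nat.factorial (∑ i, n i)) *
        ∏ i, ρ i ^ (n i) / (Nat.factorial (n i))) :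
    ∀ n : Fin I → ℕ,
      (∑ i, lam i) * π n +
        (∑ i, if 0 < n i then (n i : ℝ) / (μ i * ∑ k, (n k : ℝ)) else 0) * π n =
      (∑ i, if 0 < n i then lam i * π (Function.update n i (n i - 1)) else 0) +
        ∑ i, ((n i : ℝ) + 1) / (μ i * ((∑ k, (n k : ℝ)) + 1)) *
          π (Function.update n i (n i + 1)) :=
  product_form_stationary_general I lam μ hμ ρ hρ π hπ
end

section
/- Identity interpreting the objective: let u : (0,∞) → ℝ be differentiable, B, D nonnegative random variables with D > 0 a.s., γ > 0, and define g(x) = γ E[min{Dx, B}]. Then for 0 < a < b in the domain, γ·E[D·(u(min{b, B/D}) − u(min{a, B/D}))] = ∫_a^b γ·E[D·1{Dx < B}]·u'(x) dx, assuming suitable integrability (e.g., B, D bounded and u' continuous and bounded on [a,b]). -/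
/-!
For fixed `r`, the map `x ↦ u (min x r)` has right derivative `1{x < r} u' x` at every point of
`(a, b)`, so the fundamental theorem of calculus expresses `u (min b r) - u (min a r)` as an
integral over `[a, b]`. With `r = B/D` and `D > 0` the indicator becomes `1{D x < B}`; the
integrand `1{D x < B} D u' x` is bounded on `Ω × [a, b]`, so Fubini exchanges `E` and `∫_a^b`.
-/

open MeasureTheory Set

lemma hasDerivWithinAt_comp_min_Ioi {u : ℝ → ℝ} {u' x r : ℝ} (hu : x < r → HasDerivAt u u' x) :
    HasDerivWithinAt (fun y ↦ u (min y r)) (if x < r then u' else 0) (Ioi x) x := by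
  split_ifs with hxr
  · refine ((hu hxr).congr_of_eventuallyEq ?_).hasDerivWithinAt
    filter_upwards [Iio_mem_nhds hxr] with y hy
    rw [min_eq_left hy.le]
  · refine (hasDerivWithinAt_const x _ (u r)).congr (fun y hy ↦ ?_) ?_
    · rw [min_eq_right ((not_lt.1 hxr).trans hy.le)]
    · rw [min_eq_right (not_lt.1 hxr)]

lemma integral_indicator_Iio_eq_sub_comp_min {u u' : ℝ → ℝ} {a b r : ℝ} (hab : a ≤ b)
    (hu : ∀ x ∈ Icc a b, HasDerivAt u (u' x) x) (hu' : IntervalIntegrable u' volume a b) :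
    ∫ x in a..b, (Iio r).indicator u' x = u (min b r) - u (min a r) := by
  rcases le_or_gt r a with hra | har
  · rw [min_eq_right hra, min_eq_right (hra.trans hab), sub_self]
    refine intervalIntegral.integral_zero_ae (Filter.Eventually.of_forall fun x hx ↦ ?_)
    rw [uIoc_of_le hab] at hx
    exact indicator_of_notMem (s := Iio r) (not_lt.2 (hra.trans hx.1.le)) u'
  have hmin : MapsTo (min · r) (Icc a b) (Icc a b) := fun x hx ↦
    ⟨le_min hx.1 har.le, (min_le_left _ _).trans hx.2⟩
  refine intervalIntegral.integral_eq_sub_of_hasDeriv_right_of_le (f := fun x ↦ u (min x r))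
    hab ?_ (fun x hx ↦ ?_)
    ⟨hu'.1.indicator measurableSet_Iio, hu'.2.indicator measurableSet_Iio⟩
  · exact ContinuousOn.comp (fun x hx ↦ (hu x hx).continuousAt.continuousWithinAt)
      (continuous_id.min continuous_const).continuousOn hmin
  · simp only [indicator_apply, mem_Iio]
    exact hasDerivWithinAt_comp_min_Ioi fun _ ↦ hu x (Ioo_subset_Icc_self hx)

lemma integral_intervalIntegral_mul_swap {Ω : Type*} [MeasurableSpace Ω] {μ : Measure Ω}
    [IsFiniteMeasure μ] {G : Ω → ℝ → ℝ} {f : ℝ → ℝ} {a b C : ℝ} (hab : a ≤ b)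
    (hG : Measurable (Function.uncurry G)) (hGC : ∀ᵐ ω ∂μ, ∀ x, ‖G ω x‖ ≤ C)
    (hf : IntervalIntegrable f volume a b) :
    ∫ ω, (∫ x in a..b, G ω x * f x) ∂μ = ∫ x in a..b, (∫ ω, G ω x ∂μ) * f x := by
  have hint : Integrable (Function.uncurry fun ω x ↦ G ω x * f x)
      (μ.prod (volume.restrict (Ioc a b))) :=
    (hf.1.comp_snd μ).bdd_mul hG.aestronglyMeasurable
      (Measure.quasiMeasurePreserving_fst.ae hGC |>.mono fun p hp ↦ hp p.2)
  simp_rw [intervalIntegral.integral_of_le hab, integral_integral_swap hint, integral_mul_const]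

theorem objective_identity_general
    {Ω : Type*} [MeasurableSpace Ω] (μ : Measure Ω) [IsProbabilityMeasure μ]
    (γ : ℝ)
    (B D : Ω → ℝ) (hBm : Measurable B) (hDm : Measurable D)
    (hDpos : ∀ᵐ ω ∂μ, 0 < D ω)
    (CD : ℝ) (hDbdd : ∀ ω, D ω ≤ CD)
    (u u' : ℝ → ℝ) (hu : ∀ x : ℝ, 0 < x → HasDerivAt u (u' x) x)
    (hu'cont : ContinuousOn u' (Set.Ioi 0))
    (a b : ℝ) (ha : 0 < a) (hab : a < b) :
    γ * ∫ ω, D ω * (u (min b (B ω / D ω)) - u (min a (B ω / D ω))) ∂μ =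
      ∫ x in a..b, γ * (∫ ω, (if D ω * x < B ω then D ω else 0) ∂μ) * u' x := by
  have hIcc : Icc a b ⊆ Ioi 0 := fun x hx ↦ ha.trans_le hx.1
  have hu'int : IntervalIntegrable u' volume a b :=
    (hu'cont.mono hIcc).intervalIntegrable_of_Icc hab.le
  have hpointwise : ∀ᵐ ω ∂μ, D ω * (u (min b (B ω / D ω)) - u (min a (B ω / D ω))) =
      ∫ x in a..b, (if D ω * x < B ω then D ω else 0) * u' x := by
    filter_upwards [hDpos] with ω hD
    rw [← integral_indicator_Iio_eq_sub_comp_min hab.le (fun x hx ↦ hu x (hIcc hx)) hu'int,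
      ← intervalIntegral.integral_const_mul]
    congr 1 with x
    simp only [indicator_apply, mem_Iio, lt_div_iff₀ hD, mul_comm x]
    split_ifs <;> simp
  have hbound : ∀ᵐ ω ∂μ, ∀ x, ‖if D ω * x < B ω then D ω else 0‖ ≤ CD := by
    filter_upwards [hDpos] with ω hD x
    split_ifs
    · rw [Real.norm_of_nonneg hD.le]
      exact hDbdd ω
    · simpa using hD.le.trans (hDbdd ω)
  have hmeas : Measurable (Function.uncurry fun ω x ↦ if D ω * x < B ω then D ω else 0) :=
    Measurable.ite (measurableSet_lt (by fun_prop) (by fun_prop)) (by fun_prop) measurable_const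
  rw [integral_congr_ae hpointwise, integral_intervalIntegral_mul_swap hab.le hmeas hbound hu'int,
    ← intervalIntegral.integral_const_mul]
  simp only [mul_assoc]

/-- Identity interpreting the objective function: for differentiable `u` with
continuous derivative, bounded nonnegative `B, D` with `D > 0` a.s., and
`0 < a < b`,
`γ E[D (u(min{b, B/D}) − u(min{a, B/D}))] = ∫_a^b γ E[D 1{Dx < B}] u'(x) dx`. -/
theorem objective_identity
    {Ω : Type*} [MeasurableSpace Ω] (μ : Measure Ω) [IsProbabilityMeasure μ]
    (γ : ℝ) (hγ : 0 < γ)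
    (B D : Ω → ℝ) (hBm : Measurable B) (hDm : Measurable D)
    (hBpos : ∀ ω, 0 ≤ B ω) (hDpos : ∀ᵐ ω ∂μ, 0 < D ω)
    (CB CD : ℝ) (hBbdd : ∀ ω, B ω ≤ CB) (hDbdd : ∀ ω, D ω ≤ CD)
    (hratio : ∀ x : ℝ, μ {ω | B ω / D ω = x} = 0)
    (u u' : ℝ → ℝ) (hu : ∀ x : ℝ, 0 < x → HasDerivAt u (u' x) x)
    (hu'cont : ContinuousOn u' (Set.Ioi 0))
    (a b : ℝ) (ha : 0 < a) (hab : a < b) :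
    γ * ∫ ω, D ω * (u (min b (B ω / D ω)) - u (min a (B ω / D ω))) ∂μ =
      ∫ x in a..b, γ * (∫ ω, (if D ω * x < B ω then D ω else 0) ∂μ) * u' x :=
  objective_identity_general μ γ B D hBm hDm hDpos CD hDbdd u u' hu hu'cont a b ha hab
end
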